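/- Let Γ be a discrete subgroup of Iso(M̃), where M̃ is a complete simply connected negatively pinched manifold with boundary at infinity S_∞, and let μ_x be a Patterson–Sullivan (D_Γ-conformal) density. Suppose either Λ_Γ = Λ^c_Γ, or Λ_Γ = S_∞ and Γ is divergent. Then μ_x is positive on every nonempty relatively open subset of Λ_Γ. -/
import Mathlib


open Metric Set Filter
open scoped ENNReal

noncomputable section
open scoped Classical

/-! ### Generic metric notions -/

/-- The (extended) diameter of a set with respect to an abstract distance function. -/
def ediamWith {α : Type*} (d : α → α → ℝ) (S : Set α) : ℝ≥0∞ :=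
  ⨆ (x ∈ S) (y ∈ S), ENNReal.ofReal (d x y)

/-- The `l`-dimensional Hausdorff measure of `A` with respect to the abstract
distance function `d` (Carathéodory construction). -/
def hausdorffWith {α : Type*} (d : α → α → ℝ) (l : ℝ) (A : Set α) : ℝ≥0∞ :=
  ⨆ (ε : ℝ) (_ : 0 < ε),
    ⨅ (c : ℕ → Set α) (_ : A ⊆ ⋃ i, c i)
      (_ : ∀ i, ediamWith d (c i) ≤ ENNReal.ofReal ε),
      ∑' i, ediamWith d (c i) ^ l

/-- The open ball with respect to an abstract distance function. -/
def ballWith {α : Type*} (d : α → α → ℝ) (x : α) (r : ℝ) : Set α := {y | d x y < r}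

/-- `d` is a metric on the subset `S`. -/
def IsMetricOn {α : Type*} (d : α → α → ℝ) (S : Set α) : Prop :=
  (∀ x ∈ S, d x x = 0) ∧ (∀ x ∈ S, ∀ y ∈ S, d x y = 0 → x = y) ∧
  (∀ x ∈ S, ∀ y ∈ S, d x y = d y x) ∧
  (∀ x ∈ S, ∀ y ∈ S, ∀ z ∈ S, d x z ≤ d x y + d y z)

/-- A quasi-conformal embedding between abstract metric spaces: there is `κ > 0`
such that for every `x` and `r > 0` there is `r_f(x,r) > 0` with
`f(X) ∩ B'(f x, r_f) ⊆ f(B(x,r)) ⊆ B'(f x, κ r_f)`. -/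
def QuasiConformalWith {α β : Type*} (dX : α → α → ℝ) (dY : β → β → ℝ) (f : α → β) : Prop :=
  ∃ κ > (0 : ℝ), ∀ x : α, ∀ r > (0 : ℝ), ∃ rf > (0 : ℝ),
    Set.range f ∩ ballWith dY (f x) rf ⊆ f '' ballWith dX x r ∧
    f '' ballWith dX x r ⊆ ballWith dY (f x) (κ * rf)

/-- A quasi-isometry between abstract metric spaces. -/
def QuasiIsometryWith {α β : Type*} (dX : α → α → ℝ) (dY : β → β → ℝ) (h : α → β) : Prop :=
  ∃ L ≥ (1 : ℝ), ∃ C ≥ (0 : ℝ),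
    (∀ x y : α, dY (h x) (h y) ≤ L * dX x y + C ∧ dX x y ≤ L * dY (h x) (h y) + C) ∧
    ∀ z : β, ∃ x : α, dY z (h x) ≤ C

/-! ### Abstract pinched Hadamard manifolds -/

/-- An abstract model of an `n`-dimensional complete simply connected Riemannian
manifold `M̃` with pinched negative sectional curvature `−b² ≤ K ≤ −a²`, together
with its ideal boundary `S_∞` and the associated boundary structures
(geodesic rays, Busemann cocycles, Hamenstädt metrics, harmonic measures, ...).
Notions that are not expressible in current Mathlib (Riemannian curvature,
Laplacian, topological tameness, ends, ...) are primitive fields. -/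
structure PinchedHadamard (n : ℕ) (a b : ℝ) where
  /-- the underlying metric space of `M̃` -/
  Space : Type
  [met : MetricSpace Space]
  [sne : Nonempty Space]
  [scomplete : CompleteSpace Space]
  /-- primitive: `Space` is (the metric space underlying) an `n`-dimensional
  complete simply connected Riemannian manifold all of whose sectional
  curvatures lie in `[−b², −a²]`. -/
  IsPinchedRiemannian : Prop
  /-- the ideal boundary `S_∞` -/
  Boundary : Type
  [btop : TopologicalSpace Boundary]
  [bcompact : CompactSpace Boundary]
  [bmeas : MeasurableSpace Boundary]
  bborel : BorelSpace Boundary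
  /-- a fixed visual metric on the ideal boundary (e.g. the Gromov metric) -/
  bdist : Boundary → Boundary → ℝ
  bdist_metric : IsMetricOn bdist Set.univ
  /-- the extension of an isometry of `M̃` to the ideal boundary -/
  bAct : (Space ≃ᵢ Space) → Boundary → Boundary
  bAct_one : bAct 1 = id
  bAct_mul : ∀ g h : Space ≃ᵢ Space, bAct (g * h) = bAct g ∘ bAct h
  bAct_continuous : ∀ g : Space ≃ᵢ Space, Continuous (bAct g)
  /-- the unit-speed geodesic ray `c^ξ_x` from `x` to the ideal point `ξ` -/
  ray : Space → Boundary → ℝ → Space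
  ray_zero : ∀ x ξ, ray x ξ 0 = x
  ray_geodesic : ∀ x ξ, ∀ s ∈ Set.Ici (0 : ℝ), ∀ t ∈ Set.Ici (0 : ℝ),
    dist (ray x ξ s) (ray x ξ t) = |s - t|
  /-- the bi-infinite geodesic joining two distinct ideal points -/
  geo : Boundary → Boundary → Set Space
  geo_nonempty : ∀ ξ ζ, ξ ≠ ζ → (geo ξ ζ).Nonempty
  /-- the Busemann cocycle `B_ξ(x, y)` -/
  busemann : Boundary → Space → Space → ℝ
  busemann_cocycle : ∀ ξ x y z, busemann ξ x z = busemann ξ x y + busemann ξ y z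
  busemann_bound : ∀ ξ x y, |busemann ξ x y| ≤ dist x y
  busemann_continuous : ∀ x y, Continuous fun ξ => busemann ξ x y
  /-- `β_x(ξ,ζ) = B_ξ(x,y) + B_ζ(x,y)` with `y` on the geodesic joining `ξ, ζ` -/
  beta : Space → Boundary → Boundary → ℝ
  beta_spec : ∀ x ξ ζ, ξ ≠ ζ → ∃ y ∈ geo ξ ζ, beta x ξ ζ = busemann ξ x y + busemann ζ x y
  /-- the unit tangent bundle of `M̃` -/
  UT : Type
  /-- the negative ideal endpoint `v(−∞)` of a unit tangent vector -/
  negEnd : UT → Boundary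
  /-- the Hamenstädt metric `η_v` on `S_∞ ∖ {v(−∞)}` -/
  eta : UT → Boundary → Boundary → ℝ
  eta_metric : ∀ v, IsMetricOn (eta v) {ξ | ξ ≠ negEnd v}
  /-- primitive: `Γ` is topologically tame, i.e. `Space/Γ` is homeomorphic to
  the interior of a compact manifold-with-boundary. -/
  TopologicallyTame : Subgroup (Space ≃ᵢ Space) → Prop
  /-- primitive: `Γ` is convex-cocompact, i.e. the quotient of the convex hull
  of the limit set of `Γ` by `Γ` is compact. -/
  ConvexCocompact : Subgroup (Space ≃ᵢ Space) → Prop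
  /-- primitive: `u` is superharmonic (`Δu ≤ 0`) for the Laplacian of `M̃` -/
  Superharmonic : (Space → ℝ) → Prop
  /-- primitive: `u` is subharmonic (`Δu ≥ 0`) for the Laplacian of `M̃` -/
  Subharmonic : (Space → ℝ) → Prop
  /-- the harmonic measures `ω_x` on the ideal boundary (harmonic density),
  arising from the solution of the Dirichlet problem on `M̃ ∪ S_∞` -/
  harm : Space → MeasureTheory.Measure Boundary
  harm_prob : ∀ x, MeasureTheory.IsProbabilityMeasure (harm x)
  /-- the `λ₁`-harmonic measures `ω¹_x` on the ideal boundary, relative to `Γ`,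
  with Radon–Nikodym derivatives given by Ancona's Poisson kernel `𝔓_{λ₁}` -/
  harm1 : Subgroup (Space ≃ᵢ Space) → Space → MeasureTheory.Measure Boundary
  /-- the bottom of the spectrum `λ₁` of the Laplacian of `Space/Γ` -/
  lambda1 : Subgroup (Space ≃ᵢ Space) → ℝ
  /-- the set of ends of `Space/Γ` -/
  EndsType : Subgroup (Space ≃ᵢ Space) → Type
  /-- primitive: the end is geometrically infinite (there is a sequence of
  closed geodesics in the thick part exiting the end) -/
  GeometricallyInfiniteEnd : ∀ Γ : Subgroup (Space ≃ᵢ Space), EndsType Γ → Prop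
  /-- primitive: the end is simply degenerate (a neighborhood `S_E × [0,∞)`
  with an exiting sequence of simplicial ruled surfaces) -/
  SimplyDegenerateEnd : ∀ Γ : Subgroup (Space ≃ᵢ Space), EndsType Γ → Prop

open MeasureTheory

attribute [instance] PinchedHadamard.met PinchedHadamard.sne PinchedHadamard.scomplete
  PinchedHadamard.btop PinchedHadamard.bcompact PinchedHadamard.bmeas

namespace PinchedHadamard

variable {n n₁ n₂ : ℕ} {a b a₁ b₁ a₂ b₂ : ℝ}

/-- The Poincaré series `Σ_{γ∈Γ} e^{−s d(x, γx)}` of `Γ` converges at `s`. -/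
def PoincareSummable (H : PinchedHadamard n a b) (Γ : Subgroup (H.Space ≃ᵢ H.Space))
    (s : ℝ) : Prop :=
  ∀ x : H.Space, Summable fun γ : Γ => Real.exp (-(s * dist x ((γ : H.Space ≃ᵢ H.Space) x)))

/-- The critical exponent `D_Γ` of `Γ`. -/
def critExp (H : PinchedHadamard n a b) (Γ : Subgroup (H.Space ≃ᵢ H.Space)) : ℝ :=
  sInf {s : ℝ | H.PoincareSummable Γ s}

/-- `Γ` is divergent: its Poincaré series diverges at the critical exponent. -/
def Divergent (H : PinchedHadamard n a b) (Γ : Subgroup (H.Space ≃ᵢ H.Space)) : Prop :=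
  ¬ H.PoincareSummable Γ (H.critExp Γ)

/-- `Γ` is a discrete (equivalently, properly discontinuous) group of isometries. -/
def IsDiscrete (H : PinchedHadamard n a b) (Γ : Subgroup (H.Space ≃ᵢ H.Space)) : Prop :=
  ∀ x : H.Space, ∀ r : ℝ, {γ : Γ | dist x ((γ : H.Space ≃ᵢ H.Space) x) ≤ r}.Finite

/-- `L` is the limit set `Λ_Γ`: the unique minimal nonempty closed `Γ`-invariant
subset of the ideal boundary. -/
def IsLimitSet (H : PinchedHadamard n a b) (Γ : Subgroup (H.Space ≃ᵢ H.Space))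
    (L : Set H.Boundary) : Prop :=
  L.Nonempty ∧ IsClosed L ∧ (∀ γ ∈ Γ, H.bAct γ '' L = L) ∧
    ∀ C : Set H.Boundary, C.Nonempty → IsClosed C →
      (∀ γ ∈ Γ, H.bAct γ '' C = C) → L ⊆ C

/-- `γ` is loxodromic: it has no fixed point in `M̃` and exactly two fixed
points in `M̃ ∪ S_∞`, both lying on `S_∞`. -/
def Loxodromic (H : PinchedHadamard n a b) (γ : H.Space ≃ᵢ H.Space) : Prop :=
  (∀ x : H.Space, γ x ≠ x) ∧ {ξ : H.Boundary | H.bAct γ ξ = ξ}.ncard = 2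

/-- `Γ` is purely loxodromic. -/
def PurelyLoxodromic (H : PinchedHadamard n a b) (Γ : Subgroup (H.Space ≃ᵢ H.Space)) : Prop :=
  ∀ γ ∈ Γ, γ ≠ 1 → H.Loxodromic γ

/-- `Γ` is nonelementary: it contains a loxodromic element and its limit set is
infinite. -/
def Nonelementary (H : PinchedHadamard n a b) (Γ : Subgroup (H.Space ≃ᵢ H.Space)) : Prop :=
  (∃ γ ∈ Γ, H.Loxodromic γ) ∧ ∀ L : Set H.Boundary, H.IsLimitSet Γ L → L.Infinite

/-- The conical limit set `Λ^c_Γ`: points `ξ` such that some orbit returns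
within a bounded distance of the geodesic ray towards `ξ` for arbitrarily
large times. -/
def conicalLimitSet (H : PinchedHadamard n a b) (Γ : Subgroup (H.Space ≃ᵢ H.Space)) :
    Set H.Boundary :=
  {ξ | ∀ x : H.Space, ∃ C > (0 : ℝ), ∀ T : ℝ, ∃ t ≥ T, ∃ γ ∈ Γ,
    dist ((γ : H.Space ≃ᵢ H.Space) (H.ray x ξ t)) x < C}

/-- `Γ` is hausdorff-conservative: for each unit tangent vector `v` there is
`α(v) > 0` with `α⁻¹ r^{D_Γ} ≤ 𝔐^{D_Γ}_{η_v}(B(ξ,r) ∩ Λ_Γ) ≤ α r^{D_Γ}` for all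
balls about points of the limit set in `(S_∞ ∖ {v(−∞)}, η_v)`. -/
def HausdorffConservative (H : PinchedHadamard n a b)
    (Γ : Subgroup (H.Space ≃ᵢ H.Space)) : Prop :=
  ∀ v : H.UT, ∀ L : Set H.Boundary, H.IsLimitSet Γ L →
    ∃ α > (0 : ℝ), ∀ ξ ∈ L, ξ ≠ H.negEnd v → ∀ r > (0 : ℝ),
      ENNReal.ofReal (α⁻¹ * r ^ H.critExp Γ) ≤
        hausdorffWith (H.eta v) (H.critExp Γ) (ballWith (H.eta v) ξ r ∩ L) ∧
      hausdorffWith (H.eta v) (H.critExp Γ) (ballWith (H.eta v) ξ r ∩ L) ≤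
        ENNReal.ofReal (α * r ^ H.critExp Γ)

/-- `[ν_y]` is a `D`-conformal density under the action of `Γ`: a family of
finite Borel measures with `γ_*ν_y = ν_{γy}` and Radon–Nikodym derivative
`dν_y/d(γ_*ν_y)(ζ) = e^{−D B_ζ(γ⁻¹y, y)}`. -/
def IsConformalDensity (H : PinchedHadamard n a b) (Γ : Subgroup (H.Space ≃ᵢ H.Space))
    (D : ℝ) (ν : H.Space → Measure H.Boundary) : Prop :=
  (∀ y, IsFiniteMeasure (ν y)) ∧
  (∀ (γ : Γ) (y : H.Space),
    (ν y).map (H.bAct (γ : H.Space ≃ᵢ H.Space)) = ν ((γ : H.Space ≃ᵢ H.Space) y)) ∧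
  (∀ (γ : Γ) (y : H.Space),
    ν y = (ν ((γ : H.Space ≃ᵢ H.Space) y)).withDensity fun ζ =>
      ENNReal.ofReal (Real.exp (-(D * H.busemann ζ ((γ : H.Space ≃ᵢ H.Space).symm y) y))))

/-- `[ν_y]` is a Patterson–Sullivan density of `Γ`: a nontrivial
`D_Γ`-conformal density supported on the limit set. -/
def IsPattersonSullivan (H : PinchedHadamard n a b) (Γ : Subgroup (H.Space ≃ᵢ H.Space))
    (ν : H.Space → Measure H.Boundary) : Prop :=
  H.IsConformalDensity Γ (H.critExp Γ) ν ∧ (∀ y, ν y ≠ 0) ∧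
    ∀ L : Set H.Boundary, H.IsLimitSet Γ L → ∀ y, ν y Lᶜ = 0

/-- `Γ` is ergodic on the ideal boundary with respect to the harmonic density. -/
def HarmonicallyErgodic (H : PinchedHadamard n a b)
    (Γ : Subgroup (H.Space ≃ᵢ H.Space)) : Prop :=
  ∀ C : Set H.Boundary, MeasurableSet C → (∀ γ ∈ Γ, H.bAct γ '' C = C) →
    ∀ x : H.Space, H.harm x C = 0 ∨ H.harm x Cᶜ = 0

/-- The visual metric `d_x(ξ,ζ) = e^{−l_x(ξ,ζ)}`,
`l_x(ξ,ζ) = sup{τ : d(c^x_ξ(τ), c^x_ζ(τ)) = 1}`. -/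
def dMet (H : PinchedHadamard n a b) (x : H.Space) (ξ ζ : H.Boundary) : ℝ :=
  if ξ = ζ then 0
  else Real.exp (-sSup {τ : ℝ | dist (H.ray x ξ τ) (H.ray x ζ τ) = 1})

/-- The metric `L_x(ξ,ζ) = e^{−α_x(ξ,ζ)}`, `α_x` the distance from `x` to the
geodesic joining `ξ` and `ζ`. -/
def LMet (H : PinchedHadamard n a b) (x : H.Space) (ξ ζ : H.Boundary) : ℝ :=
  if ξ = ζ then 0 else Real.exp (-Metric.infDist x (H.geo ξ ζ))

/-- The metric `K_x(ξ,ζ) = e^{−β_x(ξ,ζ)/2}`. -/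
def KMet (H : PinchedHadamard n a b) (x : H.Space) (ξ ζ : H.Boundary) : ℝ :=
  if ξ = ζ then 0 else Real.exp (-(H.beta x ξ ζ / 2))

/-- The cross-ratio of four ideal points. -/
def crossRatio (H : PinchedHadamard n a b) (x : H.Space) (ξ₁ ξ₂ ξ₃ ξ₄ : H.Boundary) : ℝ :=
  (Real.exp (-H.beta x ξ₁ ξ₂) * Real.exp (-H.beta x ξ₃ ξ₄)) /
    (Real.exp (-H.beta x ξ₁ ξ₃) * Real.exp (-H.beta x ξ₂ ξ₄))

/-- The orbit equivalence relation of `Γ` acting on `M̃`. -/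
def orbitSetoid (H : PinchedHadamard n a b) (Γ : Subgroup (H.Space ≃ᵢ H.Space)) :
    Setoid H.Space where
  r x y := ∃ γ : Γ, (γ : H.Space ≃ᵢ H.Space) x = y
  iseqv := by
    refine ⟨fun x => ⟨1, by simp⟩, ?_, ?_⟩
    · rintro x y ⟨γ, rfl⟩
      exact ⟨γ⁻¹, by simp⟩
    · rintro x y z ⟨γ, rfl⟩ ⟨δ, rfl⟩
      exact ⟨δ * γ, by simp⟩

/-- The quotient distance on `M̃/Γ`. -/
def quotDist (H : PinchedHadamard n a b) (Γ : Subgroup (H.Space ≃ᵢ H.Space))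
    (p q : Quotient (H.orbitSetoid Γ)) : ℝ :=
  sInf {r : ℝ | ∃ x y : H.Space,
    Quotient.mk (H.orbitSetoid Γ) x = p ∧ Quotient.mk (H.orbitSetoid Γ) y = q ∧ dist x y = r}

/-- The quotients `M̃₁/Γ₁` and `M̃₂/Γ₂` are isometric. -/
def QuotIsometric (H₁ : PinchedHadamard n₁ a₁ b₁) (Γ₁ : Subgroup (H₁.Space ≃ᵢ H₁.Space))
    (H₂ : PinchedHadamard n₂ a₂ b₂) (Γ₂ : Subgroup (H₂.Space ≃ᵢ H₂.Space)) : Prop :=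
  ∃ e : Quotient (H₁.orbitSetoid Γ₁) ≃ Quotient (H₂.orbitSetoid Γ₂),
    ∀ p q, H₂.quotDist Γ₂ (e p) (e q) = H₁.quotDist Γ₁ p q

/-- `f` conjugates `Γ₁` to `Γ₂` under `χ`, i.e. `f ∘ γ = χ(γ) ∘ f` on the
ideal boundaries. -/
def ConjugatesVia (H₁ : PinchedHadamard n₁ a₁ b₁) (H₂ : PinchedHadamard n₂ a₂ b₂)
    (Γ₁ : Subgroup (H₁.Space ≃ᵢ H₁.Space)) (Γ₂ : Subgroup (H₂.Space ≃ᵢ H₂.Space))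
    (χ : Γ₁ → Γ₂) (f : H₁.Boundary → H₂.Boundary) : Prop :=
  ∀ (γ : Γ₁) (ξ : H₁.Boundary),
    f (H₁.bAct (γ : H₁.Space ≃ᵢ H₁.Space) ξ) = H₂.bAct ((χ γ : Γ₂) : H₂.Space ≃ᵢ H₂.Space) (f ξ)

/-- `hbar` is the ideal boundary extension of the quasi-isometry `h`: the image
of each geodesic ray towards `ξ` stays within bounded distance of a geodesic
ray towards `hbar ξ`. -/
def IsBoundaryExtension (H₁ : PinchedHadamard n₁ a₁ b₁) (H₂ : PinchedHadamard n₂ a₂ b₂)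
    (h : H₁.Space → H₂.Space) (hbar : H₁.Boundary → H₂.Boundary) : Prop :=
  ∀ (x : H₁.Space) (ξ : H₁.Boundary), ∃ C > (0 : ℝ), ∀ t ≥ (0 : ℝ), ∃ s ≥ (0 : ℝ),
    dist (h (H₁.ray x ξ t)) (H₂.ray (h x) (hbar ξ) s) ≤ C

end PinchedHadamard

end
open MeasureTheory PinchedHadamard


namespace PinchedHadamard

variable {n : ℕ} {a b : ℝ}

lemma bAct_inv_comp_aux (H : PinchedHadamard n a b) (g : H.Space ≃ᵢ H.Space) :
    H.bAct g⁻¹ ∘ H.bAct g = id := by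
  rw [← H.bAct_mul, inv_mul_cancel, H.bAct_one]

lemma bAct_comp_inv_aux (H : PinchedHadamard n a b) (g : H.Space ≃ᵢ H.Space) :
    H.bAct g ∘ H.bAct g⁻¹ = id := by
  rw [← H.bAct_mul, mul_inv_cancel, H.bAct_one]

lemma bAct_image_eq_preimage_aux (H : PinchedHadamard n a b) (g : H.Space ≃ᵢ H.Space)
    (A : Set H.Boundary) : H.bAct g '' A = H.bAct g⁻¹ ⁻¹' A :=
  congrFun (Set.image_eq_preimage_of_inverse (f := H.bAct g) (g := H.bAct g⁻¹)
    (fun ξ => congrFun (H.bAct_inv_comp_aux g) ξ)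
    (fun ξ => congrFun (H.bAct_comp_inv_aux g) ξ)) A

lemma bAct_injective_aux (H : PinchedHadamard n a b) (g : H.Space ≃ᵢ H.Space) :
    Function.Injective (H.bAct g) :=
  Function.LeftInverse.injective (g := H.bAct g⁻¹) (fun ξ => congrFun (H.bAct_inv_comp_aux g) ξ)

lemma bAct_image_isOpen_aux (H : PinchedHadamard n a b) (g : H.Space ≃ᵢ H.Space)
    {U : Set H.Boundary} (hU : IsOpen U) : IsOpen (H.bAct g '' U) := by
  rw [H.bAct_image_eq_preimage_aux]
  exact hU.preimage (H.bAct_continuous g⁻¹)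

/-- A conformal density sends null sets to null sets under the boundary action. -/
lemma conformal_null_image_aux {H : PinchedHadamard n a b}
    {Γ : Subgroup (H.Space ≃ᵢ H.Space)} {D : ℝ} {ν : H.Space → MeasureTheory.Measure H.Boundary}
    (hν : H.IsConformalDensity Γ D ν) (γ : Γ) (x : H.Space)
    {A : Set H.Boundary} (hA : MeasurableSet A) (h0 : ν x A = 0) :
    ν x (H.bAct (γ : H.Space ≃ᵢ H.Space) '' A) = 0 := by
  letI := H.bborel
  have hc : ((γ⁻¹ : Γ) : H.Space ≃ᵢ H.Space) = ((γ : H.Space ≃ᵢ H.Space))⁻¹ := rfl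
  have hmap := hν.2.1 γ⁻¹ x
  rw [hc] at hmap
  have hmeas : Measurable (H.bAct ((γ : H.Space ≃ᵢ H.Space))⁻¹) :=
    (H.bAct_continuous _).measurable
  have step1 : ν x (H.bAct (γ : H.Space ≃ᵢ H.Space) '' A)
      = ν (((γ : H.Space ≃ᵢ H.Space))⁻¹ x) A := by
    rw [H.bAct_image_eq_preimage_aux, ← MeasureTheory.Measure.map_apply hmeas hA, hmap]
  rw [step1]
  have hwd := hν.2.2 γ (((γ : H.Space ≃ᵢ H.Space))⁻¹ x)
  have hx : (γ : H.Space ≃ᵢ H.Space) (((γ : H.Space ≃ᵢ H.Space))⁻¹ x) = x := by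
    simp
  rw [hx] at hwd
  rw [hwd, MeasureTheory.withDensity_apply _ hA,
    MeasureTheory.Measure.restrict_eq_zero.mpr h0, MeasureTheory.lintegral_zero_measure]

end PinchedHadamard

/-- Let `Γ` be a discrete subgroup of `Iso(M̃)` and `μ_x` a
Patterson–Sullivan (`D_Γ`-conformal) density. If either `Λ_Γ = Λ^c_Γ`, or `Λ_Γ = S_∞`
and `Γ` is divergent, then `μ_x` is positive on every nonempty relatively open subset of
`Λ_Γ`. -/
theorem pattersonSullivan_positive_on_open_subsets
    {n : ℕ} {a b : ℝ} (ha : 0 < a) (hab : a ≤ b)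
    (H : PinchedHadamard n a b) (hHgeom : H.IsPinchedRiemannian)
    (Γ : Subgroup (H.Space ≃ᵢ H.Space)) (hΓdisc : H.IsDiscrete Γ)
    (ν : H.Space → Measure H.Boundary) (hν : H.IsPattersonSullivan Γ ν)
    (L : Set H.Boundary) (hL : H.IsLimitSet Γ L)
    (hcase : L = H.conicalLimitSet Γ ∨ (L = Set.univ ∧ H.Divergent Γ)) :
    ∀ U : Set H.Boundary, IsOpen U → (U ∩ L).Nonempty → ∀ x : H.Space,
      0 < ν x (U ∩ L) := by
  intro U hU hUL x
  letI := H.bborel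
  by_contra hpos
  have h0 : ν x (U ∩ L) = 0 := by rwa [pos_iff_ne_zero, not_ne_iff] at hpos
  have hAmeas : MeasurableSet (U ∩ L) := hU.measurableSet.inter hL.2.1.measurableSet
  have hcount : Countable Γ := by
    have huniv : (Set.univ : Set Γ)
        = ⋃ m : ℕ, {γ : Γ | dist x ((γ : H.Space ≃ᵢ H.Space) x) ≤ m} := by
      ext γ
      simp only [Set.mem_univ, true_iff, Set.mem_iUnion, Set.mem_setOf_eq]
      exact exists_nat_ge (dist x ((γ : H.Space ≃ᵢ H.Space) x))
    have hC : (Set.univ : Set Γ).Countable := by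
      rw [huniv]
      exact Set.countable_iUnion fun m => (hΓdisc x m).countable
    exact Set.countable_univ_iff.mp hC
  set W : Set H.Boundary := ⋃ γ : Γ, H.bAct (γ : H.Space ≃ᵢ H.Space) '' U with hWdef
  have hWopen : IsOpen W := isOpen_iUnion fun γ => H.bAct_image_isOpen_aux _ hU
  have hUW : U ⊆ W := by
    intro ξ hξ
    refine Set.mem_iUnion.mpr ⟨1, ?_⟩
    have : H.bAct ((1 : Γ) : H.Space ≃ᵢ H.Space) '' U = U := by
      rw [show ((1 : Γ) : H.Space ≃ᵢ H.Space) = 1 from rfl, H.bAct_one, Set.image_id]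
    rw [this]; exact hξ
  have hWinv : ∀ δ : Γ, H.bAct (δ : H.Space ≃ᵢ H.Space) '' W = W := by
    intro δ
    rw [hWdef, Set.image_iUnion]
    have h1 : ∀ γ : Γ,
        H.bAct (δ : H.Space ≃ᵢ H.Space) '' (H.bAct (γ : H.Space ≃ᵢ H.Space) '' U)
          = H.bAct ((δ * γ : Γ) : H.Space ≃ᵢ H.Space) '' U := by
      intro γ
      rw [show ((δ * γ : Γ) : H.Space ≃ᵢ H.Space)
            = (δ : H.Space ≃ᵢ H.Space) * (γ : H.Space ≃ᵢ H.Space) from rfl,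
        H.bAct_mul, Set.image_comp]
    calc (⋃ γ : Γ, H.bAct (δ : H.Space ≃ᵢ H.Space) '' (H.bAct (γ : H.Space ≃ᵢ H.Space) '' U))
        = ⋃ γ : Γ, H.bAct ((δ * γ : Γ) : H.Space ≃ᵢ H.Space) '' U := by
          exact Set.iUnion_congr h1
      _ = ⋃ γ : Γ, H.bAct ((γ : Γ) : H.Space ≃ᵢ H.Space) '' U := by
          exact (Equiv.mulLeft δ).surjective.iUnion_comp
            (fun γ : Γ => H.bAct ((γ : Γ) : H.Space ≃ᵢ H.Space) '' U)
  have hLinv : ∀ δ : Γ, H.bAct (δ : H.Space ≃ᵢ H.Space) '' L = L := fun δ =>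
    hL.2.2.1 (δ : H.Space ≃ᵢ H.Space) δ.2
  have hWL0 : ν x (W ∩ L) = 0 := by
    have : W ∩ L = ⋃ γ : Γ, H.bAct (γ : H.Space ≃ᵢ H.Space) '' (U ∩ L) := by
      rw [hWdef, Set.iUnion_inter]
      refine Set.iUnion_congr fun γ => ?_
      rw [Set.image_inter (H.bAct_injective_aux _), hLinv γ]
    rw [this]
    exact MeasureTheory.measure_iUnion_null fun γ =>
      PinchedHadamard.conformal_null_image_aux hν.1 γ x hAmeas h0
  by_cases hsub : L ⊆ W
  · have hL0 : ν x L = 0 :=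
      MeasureTheory.measure_mono_null (Set.subset_inter hsub subset_rfl) hWL0
    have hLc0 : ν x Lᶜ = 0 := hν.2.2 L hL x
    have : ν x Set.univ = 0 := by
      have := MeasureTheory.measure_union_le (μ := ν x) L Lᶜ
      rw [Set.union_compl_self, hL0, hLc0] at this
      simpa using this
    exact hν.2.1 x (MeasureTheory.Measure.measure_univ_eq_zero.mp this)
  · have hCne : (L \ W).Nonempty := Set.diff_nonempty.mpr hsub
    have hCcl : IsClosed (L \ W) := hL.2.1.sdiff hWopen
    have hCinv : ∀ g : H.Space ≃ᵢ H.Space, g ∈ Γ → H.bAct g '' (L \ W) = L \ W := by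
      intro g hg
      rw [Set.image_diff (H.bAct_injective_aux _), hLinv ⟨g, hg⟩, hWinv ⟨g, hg⟩]
    have hmin := hL.2.2.2 (L \ W) hCne hCcl hCinv
    obtain ⟨ξ, hξU, hξL⟩ := hUL
    exact (hmin hξL).2 (hUW hξU)
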